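/- arXiv:1104.1681 — 2 statements merged into one kernel-verified Lean document; each statement's English description precedes it below -/
import Mathlib

section
/- Let G be a Polish group with a fixed countable basis {V_n} with V₀ = G, acting continuously on a Polish space X. For every countable ordinal α and every x ∈ X, the set S_α(x) = {z ∈ X : (z,G) ≤_α (x,G)} is a G-invariant Borel set containing x. -/
open Set Topology Pointwise

/-- Hjorth's back-and-forth relation. `HLe Bas α y V x W` corresponds to
`(y,V) ≤_{1+α} (x,W)` of the paper (so `HLe Bas 0` is `≤₁`):
`(y,V) ≤₁ (x,W)` iff `cl(V·y) ⊆ cl(W·x)`;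
`(y,V) ≤_{α+1} (x,W)` iff for every basic open `V' ⊆ V` there is a basic open
`W' ⊆ W` with `(x,W') ≤_α (y,V')`; limit stages are intersections. -/
noncomputable def HLe {G X : Type*} [SMul G X] [TopologicalSpace X] (Bas : Set (Set G)) :
    Ordinal → X → Set G → X → Set G → Prop := fun α =>
  Ordinal.limitRecOn (motive := fun _ => X → Set G → X → Set G → Prop) α
    (fun y V x W => closure ((· • y) '' V) ⊆ closure ((· • x) '' W))
    (fun _ ih => fun y V x W => ∀ V' ∈ Bas, V' ⊆ V → ∃ W' ∈ Bas, W' ⊆ W ∧ ih x W' y V')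
    (fun o _ ih => fun y V x W => ∀ β, ∀ h : β < o, ih β h y V x W)

/-!
Right translation by `g` turns `(g • y, A)` into `(y, A g)`; since `A g` is open it can be shrunk
to a basic open set, and `HLe` is antitone in the left and monotone in the right neighbourhood, so
the sections `{z | (z, G) ≤ (x, G)}` are invariant. For Borelness, at level 0 the section with `z`
on the left is closed and the one with `z` on the right is `G_δ` (test the closure inclusion on a
countable basis of `X`); successor levels quantify over the countable basis of `G`, and limit levels
intersect over the countably many smaller ordinals.
-/

section Relation

variable {G X : Type*} [SMul G X] [TopologicalSpace X] {Bas : Set (Set G)}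

theorem hLe_zero {y x : X} {A B : Set G} :
    HLe Bas 0 y A x B ↔ closure ((· • y) '' A) ⊆ closure ((· • x) '' B) := by
  rw [HLe, Ordinal.limitRecOn_zero]

theorem hLe_add_one {α : Ordinal} {y x : X} {A B : Set G} :
    HLe Bas (α + 1) y A x B ↔
      ∀ V' ∈ Bas, V' ⊆ A → ∃ W' ∈ Bas, W' ⊆ B ∧ HLe Bas α x W' y V' := by
  rw [HLe, Ordinal.limitRecOn_add_one]
  rfl

theorem hLe_limit {α : Ordinal} (hα : Order.IsSuccLimit α) {y x : X} {A B : Set G} :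
    HLe Bas α y A x B ↔ ∀ β < α, HLe Bas β y A x B := by
  rw [HLe, Ordinal.limitRecOn_limit _ _ _ _ hα]
  rfl

theorem hLe_refl (α : Ordinal) (y : X) (A : Set G) : HLe Bas α y A y A := by
  induction α using Ordinal.limitRecOn generalizing y A with
  | zero => exact hLe_zero.2 subset_rfl
  | add_one β ih => exact hLe_add_one.2 fun V' hV' hV'A => ⟨V', hV', hV'A, ih y V'⟩
  | limit α hα ih => exact (hLe_limit hα).2 fun β hβ => ih β hβ y A

theorem hLe_mono {α : Ordinal} {y x : X} {A A' B B' : Set G} (hA : A' ⊆ A) (hB : B ⊆ B')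
    (h : HLe Bas α y A x B) : HLe Bas α y A' x B' := by
  induction α using Ordinal.limitRecOn generalizing y x A A' B B' with
  | zero =>
    rw [hLe_zero] at h ⊢
    exact (closure_mono (image_mono hA)).trans (h.trans (closure_mono (image_mono hB)))
  | add_one β _ =>
    rw [hLe_add_one] at h ⊢
    intro V' hV' hV'A
    obtain ⟨W', hW', hW'B, hle⟩ := h V' hV' (hV'A.trans hA)
    exact ⟨W', hW', hW'B.trans hB, hle⟩
  | limit α hα ih =>
    rw [hLe_limit hα] at h ⊢
    exact fun β hβ => ih β hβ hA hB (h β hβ)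

end Relation

theorem TopologicalSpace.IsTopologicalBasis.exists_mem_subset_image_mul_right {G : Type*}
    [Group G] [TopologicalSpace G] [ContinuousMul G] {Bas : Set (Set G)}
    (hBas : IsTopologicalBasis Bas) {B : Set G} (hB : B ∈ Bas) (g : G) :
    ∃ B' ∈ Bas, B' ⊆ (· * g) '' B := by
  obtain rfl | ⟨a, ha⟩ := B.eq_empty_or_nonempty
  · exact ⟨∅, hB, empty_subset _⟩
  · obtain ⟨B', hB', -, hB'sub⟩ := hBas.exists_subset_of_mem_open (mem_image_of_mem _ ha)
      ((isOpenMap_mul_right g) B (hBas.isOpen hB))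
    exact ⟨B', hB', hB'sub⟩

section Translate

variable {G X : Type*} [Group G] [TopologicalSpace G] [ContinuousMul G] [MulAction G X]
  [TopologicalSpace X] {Bas : Set (Set G)}

/-- Both positions are handled together because the successor step swaps them. -/
theorem hLe_smul_of_image_mul_right (hBas : TopologicalSpace.IsTopologicalBasis Bas)
    (α : Ordinal) :
    (∀ (g : G) (y x : X) (A B : Set G),
      HLe Bas α y ((· * g) '' A) x B → HLe Bas α (g • y) A x B) ∧
    (∀ (g : G) (y x : X) (A B : Set G),
      HLe Bas α x B y ((· * g) '' A) → HLe Bas α x B (g • y) A) := by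
  induction α using Ordinal.limitRecOn with
  | zero =>
    have (g : G) (y : X) (A : Set G) : (· • (g • y)) '' A = (· • y) '' ((· * g) '' A) := by
      simp only [image_image, smul_smul]
    simp only [hLe_zero, this]
    exact ⟨fun _ _ _ _ _ => id, fun _ _ _ _ _ => id⟩
  | add_one β ih =>
    simp only [hLe_add_one]
    constructor
    · intro g y x A B h V' hV' hV'A
      obtain ⟨V'', hV'', hV''V'⟩ := hBas.exists_mem_subset_image_mul_right hV' g
      obtain ⟨W', hW', hW'B, hle⟩ := h V'' hV'' (hV''V'.trans (image_mono hV'A))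
      exact ⟨W', hW', hW'B, ih.2 g y x V' W' (hLe_mono subset_rfl hV''V' hle)⟩
    · intro g y x A B h V' hV' hV'B
      obtain ⟨W', hW', hW'A, hle⟩ := h V' hV' hV'B
      obtain ⟨W'', hW'', hW''W'⟩ := hBas.exists_mem_subset_image_mul_right hW' g⁻¹
      have hW''A : W'' ⊆ A := by
        simpa only [image_image, mul_inv_cancel_right, image_id'] using
          hW''W'.trans (image_mono (f := (· * g⁻¹)) hW'A)
      have hgW'' : (· * g) '' W'' ⊆ W' := by
        simpa only [image_image, inv_mul_cancel_right, image_id'] using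
          image_mono (f := (· * g)) hW''W'
      exact ⟨W'', hW'', hW''A, ih.1 g y x W'' V' (hLe_mono hgW'' subset_rfl hle)⟩
  | limit α hα ih =>
    simp only [hLe_limit hα]
    exact ⟨fun g y x A B h β hβ => (ih β hβ).1 g y x A B (h β hβ),
      fun g y x A B h β hβ => (ih β hβ).2 g y x A B (h β hβ)⟩

end Translate

theorem TopologicalSpace.IsTopologicalBasis.closure_subset_closure_iff {X : Type*}
    [TopologicalSpace X] {b : Set (Set X)} (hb : IsTopologicalBasis b) {s t : Set X} :
    closure s ⊆ closure t ↔ ∀ U ∈ b, (U ∩ s).Nonempty → (U ∩ t).Nonempty := by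
  refine ⟨fun h U hU hUs => ?_, fun h => closure_minimal (fun p hp => ?_) isClosed_closure⟩
  · obtain ⟨p, hpU, hps⟩ := hUs
    exact hb.mem_closure_iff.1 (h (subset_closure hps)) U hU hpU
  · exact hb.mem_closure_iff.2 fun U hU hpU => h U hU ⟨p, hpU, hp⟩

theorem measurableSet_setOf_forall_subset_exists_subset {X ι : Type*} [MeasurableSpace X]
    {s : Set (Set ι)} (hs : s.Countable) (A B : Set ι) {p : Set ι → Set ι → X → Prop}
    (hp : ∀ V W, MeasurableSet {z | p V W z}) :
    MeasurableSet {z | ∀ V ∈ s, V ⊆ A → ∃ W ∈ s, W ⊆ B ∧ p V W z} := by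
  have : {z | ∀ V ∈ s, V ⊆ A → ∃ W ∈ s, W ⊆ B ∧ p V W z} =
      ⋂ V ∈ s, ⋂ (_ : V ⊆ A), ⋃ W ∈ s, ⋃ (_ : W ⊆ B), {z | p V W z} := by
    ext z
    simp only [mem_ofPred_eq, mem_iInter, mem_iUnion, exists_prop]
  rw [this]
  exact .biInter hs fun V _ => .iInter fun _ => .biUnion hs fun W _ => .iUnion fun _ => hp V W

theorem Ordinal.countable_Iio_of_card_le_aleph0 {α : Ordinal} (hα : α.card ≤ Cardinal.aleph0) :
    (Iio α).Countable := by
  rwa [← Cardinal.le_aleph0_iff_set_countable, Cardinal.mk_Iio_ordinal, Cardinal.lift_le_aleph0]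

section Measurable

variable {G X : Type*} [SMul G X] [TopologicalSpace X] [ContinuousConstSMul G X]

theorem isClosed_setOf_closure_image_smul_subset (A : Set G) {C : Set X} (hC : IsClosed C) :
    IsClosed {z : X | closure ((· • z) '' A) ⊆ C} := by
  have : {z : X | closure ((· • z) '' A) ⊆ C} = ⋂ g ∈ A, (g • ·) ⁻¹' C := by
    ext z
    simp [hC.closure_subset_iff, subset_def]
  rw [this]
  exact isClosed_biInter fun g _ => hC.preimage (continuous_const_smul g)

theorem isOpen_setOf_inter_image_smul_nonempty (A : Set G) {U : Set X} (hU : IsOpen U) :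
    IsOpen {z : X | (U ∩ (· • z) '' A).Nonempty} := by
  have : {z : X | (U ∩ (· • z) '' A).Nonempty} = ⋃ g ∈ A, (g • ·) ⁻¹' U := by
    ext z
    simp [inter_nonempty, and_comm]
  rw [this]
  exact isOpen_biUnion fun g _ => hU.preimage (continuous_const_smul g)

variable [MeasurableSpace X] [OpensMeasurableSpace X]

open TopologicalSpace in
theorem measurableSet_setOf_subset_closure_image_smul [SecondCountableTopology X] (S : Set X)
    (A : Set G) : MeasurableSet {z : X | closure S ⊆ closure ((· • z) '' A)} := by
  have : {z : X | closure S ⊆ closure ((· • z) '' A)} =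
      ⋂ U ∈ countableBasis X, ⋂ (_ : (U ∩ S).Nonempty),
        {z | (U ∩ (· • z) '' A).Nonempty} := by
    ext z
    simp only [mem_iInter, mem_ofPred_eq]
    exact (isBasis_countableBasis X).closure_subset_closure_iff
  rw [this]
  exact .biInter (countable_countableBasis X) fun U hU => .iInter fun _ =>
    (isOpen_setOf_inter_image_smul_nonempty A (isOpen_of_mem_countableBasis hU)).measurableSet

theorem measurableSet_setOf_hLe [SecondCountableTopology X] {Bas : Set (Set G)}
    (hBas : Bas.Countable) (x : X) {α : Ordinal} (hα : α.card ≤ Cardinal.aleph0)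
    (A B : Set G) :
    MeasurableSet {z | HLe Bas α z A x B} ∧ MeasurableSet {z | HLe Bas α x B z A} := by
  induction α using Ordinal.limitRecOn generalizing A B with
  | zero =>
    simp only [hLe_zero]
    exact ⟨(isClosed_setOf_closure_image_smul_subset A isClosed_closure).measurableSet,
      measurableSet_setOf_subset_closure_image_smul _ A⟩
  | add_one β ih =>
    have ih := ih ((Ordinal.card_le_card le_self_add).trans hα)
    simp only [hLe_add_one]
    exact ⟨measurableSet_setOf_forall_subset_exists_subset hBas A B fun V W => (ih V W).2,
      measurableSet_setOf_forall_subset_exists_subset hBas B A fun V W => (ih W V).1⟩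
  | limit α hlim ih =>
    have ih β (hβ : β ∈ Iio α) := ih β hβ ((Ordinal.card_le_card hβ.le).trans hα) A B
    simp only [hLe_limit hlim, ofPred_forall]
    exact ⟨.biInter (Ordinal.countable_Iio_of_card_le_aleph0 hα) fun β hβ => (ih β hβ).1,
      .biInter (Ordinal.countable_Iio_of_card_le_aleph0 hα) fun β hβ => (ih β hβ).2⟩

end Measurable

theorem hLe_section_invariant_borel_general {G X : Type*} [Group G] [TopologicalSpace G]
    [IsTopologicalGroup G] [TopologicalSpace X] [PolishSpace X]
    [MeasurableSpace X] [BorelSpace X] [MulAction G X] [ContinuousSMul G X]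
    (V : ℕ → Set G) (hV : TopologicalSpace.IsTopologicalBasis (Set.range V))
    {α : Ordinal} (hαc : α.card ≤ Cardinal.aleph0) (x : X) :
    x ∈ {z : X | HLe (Set.range V) α z (Set.univ : Set G) x (Set.univ : Set G)} ∧
    (∀ g : G, ∀ z ∈ {z : X | HLe (Set.range V) α z (Set.univ : Set G) x (Set.univ : Set G)},
      g • z ∈ {z : X | HLe (Set.range V) α z (Set.univ : Set G) x (Set.univ : Set G)}) ∧
    MeasurableSet {z : X | HLe (Set.range V) α z (Set.univ : Set G) x (Set.univ : Set G)} := by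
  refine ⟨hLe_refl α x univ, fun g z hz => ?_,
    (measurableSet_setOf_hLe (countable_range V) x hαc univ univ).1⟩
  have hg : (· * g) '' (univ : Set G) = univ := image_univ_of_surjective (mul_right_surjective g)
  exact (hLe_smul_of_image_mul_right hV α).1 g z x univ univ (by rwa [hg])

/-- For every countable ordinal `α` and `x ∈ X`, the set
`S_α(x) = {z : (z,G) ≤_{1+α} (x,G)}` is a `G`-invariant Borel set containing `x`. -/
theorem hLe_section_invariant_borel {G X : Type*} [Group G] [TopologicalSpace G]
    [IsTopologicalGroup G] [PolishSpace G] [TopologicalSpace X] [PolishSpace X]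
    [MeasurableSpace X] [BorelSpace X] [MulAction G X] [ContinuousSMul G X]
    (V : ℕ → Set G) (hV : TopologicalSpace.IsTopologicalBasis (Set.range V))
    (hV0 : V 0 = Set.univ) {α : Ordinal} (hαc : α.card ≤ Cardinal.aleph0) (x : X) :
    x ∈ {z : X | HLe (Set.range V) α z (Set.univ : Set G) x (Set.univ : Set G)} ∧
    (∀ g : G, ∀ z ∈ {z : X | HLe (Set.range V) α z (Set.univ : Set G) x (Set.univ : Set G)},
      g • z ∈ {z : X | HLe (Set.range V) α z (Set.univ : Set G) x (Set.univ : Set G)}) ∧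
    MeasurableSet {z : X | HLe (Set.range V) α z (Set.univ : Set G) x (Set.univ : Set G)} :=
  hLe_section_invariant_borel_general V hV hαc x
end

section
/- Let X be a Polish G-space for a Polish group G. If B ⊆ X is Borel and H ⊆ G is open, then the Vaught transform B^{*H} = {x ∈ X : {g ∈ H : g·x ∈ B} is comeager in H} is Borel. Moreover if B is Π⁰_α with α ≥ 2, then B^{*H} is Π⁰_α. -/
open Set Topology Pointwise

/-- The Vaught `*`-transform: `B^{*H} = {x : {g ∈ H : g • x ∈ B} is comeager in H}`. -/
def VaughtStar {G X : Type*} [SMul G X] [TopologicalSpace G] (B : Set X) (H : Set G) : Set X :=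
  {x | {g : H | (g : G) • x ∈ B} ∈ residual H}

/-- The Borel pointclass `Σ⁰_α`. -/
def SigmaClass (X : Type*) [TopologicalSpace X] (α : Ordinal) : Set (Set X) :=
  if α ≤ 1 then {s | IsOpen s}
  else {s | ∃ f : ℕ → Set X,
    (∀ n, ∃ β, ∃ _ : β < α, (f n)ᶜ ∈ SigmaClass X β) ∧ s = ⋃ n, f n}
termination_by α

/-- The multiplicative Borel pointclass `Π⁰_α`. -/
def PiClass (X : Type*) [TopologicalSpace X] (α : Ordinal) : Set (Set X) :=
  {s | sᶜ ∈ SigmaClass X α}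

/-!
For an open `V ⊆ G`, `x ∈ B^{*V}` iff `V \ {g | g • x ∈ B}` is meagre in `G`. Hence the
transform commutes with countable intersections, and it maps a closed `B` to a closed set: that
difference is then open, and an open meagre set in a Baire space is empty. For complements, the
Baire property of `{g | g • x ∈ B}` localises category to basic open sets:
`(Bᶜ)^{*V} = ⋂ (B^{*W})ᶜ` over the nonempty basic open `W ⊆ V`, a countable intersection.
An induction over the Borel sets, resp. over `α`, gives both claims.
-/

open Filter TopologicalSpace

section Meagre

variable {G : Type*} [TopologicalSpace G]

lemma isMeagre_diff_of_residualEq {s t : Set G} (h : s =ᵇ t) : IsMeagre (s \ t) := by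
  filter_upwards [h.mem_iff] with g hg hgd using hgd.2 (hg.1 hgd.1)

lemma IsOpen.preimage_val_mem_residual_iff {V T : Set G} (hV : IsOpen V) :
    ((↑) ⁻¹' T : Set V) ∈ residual V ↔ IsMeagre (V \ T) := by
  have hcompl : ((↑) ⁻¹' T : Set V)ᶜ = (↑) ⁻¹' (V \ T) := by ext; simp
  constructor
  · intro h
    have hm : IsMeagre ((↑) ⁻¹' (V \ T) : Set V) := by rwa [IsMeagre, ← hcompl, compl_compl]
    simpa [Subtype.image_preimage_coe, inter_eq_right.2 sdiff_subset] using hm.image_val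
  · intro h
    rw [← compl_compl ((↑) ⁻¹' T : Set V), hcompl]
    exact h.preimage_of_isOpenMap continuous_subtype_val hV.isOpenMap_subtype_val

lemma IsOpen.isMeagre_iff_eq_empty [BaireSpace G] {U : Set G} (hU : IsOpen U) :
    IsMeagre U ↔ U = ∅ :=
  ⟨fun h => not_nonempty_iff_eq_empty.1 fun hne => not_isMeagre_of_isOpen hU hne h,
    fun h => h ▸ IsMeagre.empty⟩

def basicOpensIn [SecondCountableTopology G] (V : Set G) : Set (Set G) :=
  {W ∈ countableBasis G | W.Nonempty ∧ W ⊆ V}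

instance [SecondCountableTopology G] (V : Set G) : Countable (basicOpensIn V) :=
  ((countable_countableBasis G).mono fun _ hW => hW.1).to_subtype

lemma isOpen_of_mem_basicOpensIn [SecondCountableTopology G] {V W : Set G}
    (hW : W ∈ basicOpensIn V) : IsOpen W :=
  isOpen_of_mem_countableBasis hW.1

theorem BaireMeasurableSet.isMeagre_inter_iff [BaireSpace G] [SecondCountableTopology G]
    {S V : Set G} (hS : BaireMeasurableSet S) (hV : IsOpen V) :
    IsMeagre (V ∩ S) ↔ ∀ W ∈ basicOpensIn V, ¬ IsMeagre (W \ S) := by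
  constructor
  · rintro hVS W ⟨hW, hWne, hWV⟩ hWS
    refine not_isMeagre_of_isOpen (isOpen_of_mem_countableBasis hW) hWne
      ((hWS.union hVS).mono fun g hg => ?_)
    by_cases hgS : g ∈ S
    exacts [Or.inr ⟨hWV hg, hgS⟩, Or.inl ⟨hg, hgS⟩]
  · intro h
    obtain ⟨u, hu, hSu⟩ := hS.residualEq_isOpen
    by_contra hVS
    have hVu : ¬ IsMeagre (V ∩ u) := fun hVu =>
      hVS <| ((isMeagre_diff_of_residualEq hSu).union hVu).mono fun g ⟨hgV, hgS⟩ => by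
        by_cases hgu : g ∈ u
        exacts [Or.inr ⟨hgV, hgu⟩, Or.inl ⟨hgS, hgu⟩]
    obtain ⟨g, hg⟩ := nonempty_of_not_isMeagre hVu
    obtain ⟨W, hW, hgW, hWVu⟩ :=
      (isBasis_countableBasis G).exists_subset_of_mem_open hg (hV.inter hu)
    exact h W ⟨hW, ⟨g, hgW⟩, hWVu.trans inter_subset_left⟩
      ((isMeagre_diff_of_residualEq hSu.symm).mono
        (sdiff_subset_sdiff_left (hWVu.trans inter_subset_right)))

end Meagre

section Vaught

variable {G X : Type*} [TopologicalSpace G] [SMul G X] {B : Set X} {V : Set G}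

lemma mem_vaughtStar_iff (hV : IsOpen V) {x : X} :
    x ∈ VaughtStar B V ↔ IsMeagre (V \ (· • x) ⁻¹' B) :=
  hV.preimage_val_mem_residual_iff (T := (· • x) ⁻¹' B)

lemma vaughtStar_iInter {ι : Sort*} [Countable ι] (f : ι → Set X) :
    VaughtStar (⋂ i, f i) V = ⋂ i, VaughtStar (f i) V := by
  ext x
  simp only [VaughtStar, mem_ofPred_eq, mem_iInter, ofPred_forall]
  exact countable_iInter_mem

variable [TopologicalSpace X] [ContinuousSMul G X]

lemma vaughtStar_eq_biInter_of_isClosed [BaireSpace G] (hB : IsClosed B) (hV : IsOpen V) :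
    VaughtStar B V = ⋂ g ∈ V, (g • ·) ⁻¹' B := by
  ext x
  have hopen : IsOpen (V \ (· • x) ⁻¹' B) :=
    hV.sdiff (hB.preimage (continuous_id.smul continuous_const))
  rw [mem_vaughtStar_iff hV, hopen.isMeagre_iff_eq_empty, sdiff_eq_empty]
  simp [subset_def]

lemma IsClosed.vaughtStar [BaireSpace G] (hB : IsClosed B) (hV : IsOpen V) :
    IsClosed (VaughtStar B V) := by
  rw [vaughtStar_eq_biInter_of_isClosed hB hV]
  exact isClosed_biInter fun g _ => hB.preimage (continuous_const_smul g)

variable [MeasurableSpace X] [BorelSpace X] [BaireSpace G] [SecondCountableTopology G]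

lemma vaughtStar_compl (hB : MeasurableSet B) (hV : IsOpen V) :
    VaughtStar Bᶜ V = ⋂ W : basicOpensIn V, (VaughtStar B (W : Set G))ᶜ := by
  borelize G
  ext x
  have hS : BaireMeasurableSet ((· • x) ⁻¹' B : Set G) :=
    ((continuous_id.smul continuous_const).measurable hB).baireMeasurableSet
  rw [mem_vaughtStar_iff hV, preimage_compl, sdiff_compl, hS.isMeagre_inter_iff hV]
  simp only [mem_iInter, mem_compl_iff, Subtype.forall]
  exact forall₂_congr fun W hW => by rw [mem_vaughtStar_iff (isOpen_of_mem_basicOpensIn hW)]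

lemma measurableSet_vaughtStar_compl (hB : MeasurableSet B)
    (h : ∀ W : Set G, IsOpen W → MeasurableSet (VaughtStar B W)) (hV : IsOpen V) :
    MeasurableSet (VaughtStar Bᶜ V) := by
  rw [vaughtStar_compl hB hV]
  exact .iInter fun W => (h W (isOpen_of_mem_basicOpensIn W.2)).compl

theorem MeasurableSet.vaughtStar (hB : MeasurableSet B) (hV : IsOpen V) :
    MeasurableSet (VaughtStar B V) := by
  induction B, hB using MeasurableSet.induction_on_open generalizing V with
  | isOpen U hU =>
    rw [← compl_compl U]
    exact measurableSet_vaughtStar_compl hU.measurableSet.compl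
      (fun W hW => (hU.isClosed_compl.vaughtStar hW).measurableSet) hV
  | compl t ht ih => exact measurableSet_vaughtStar_compl ht (fun W hW => ih hW) hV
  | iUnion f _ hf ih =>
    rw [← compl_compl (⋃ i, f i), compl_iUnion]
    refine measurableSet_vaughtStar_compl (.iInter fun i => (hf i).compl) (fun W hW => ?_) hV
    rw [vaughtStar_iInter]
    exact .iInter fun i => measurableSet_vaughtStar_compl (hf i) (fun _ hU => ih i hU) hW

end Vaught

section BorelClasses

variable {X : Type*} [TopologicalSpace X] {α : Ordinal} {s : Set X}

lemma sigmaClass_of_le_one (hα : α ≤ 1) : SigmaClass X α = {s | IsOpen s} := by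
  rw [SigmaClass, if_pos hα]

lemma sigmaClass_of_one_lt (hα : 1 < α) :
    SigmaClass X α =
      {s | ∃ f : ℕ → Set X, (∀ n, ∃ β < α, f n ∈ PiClass X β) ∧ s = ⋃ n, f n} := by
  rw [SigmaClass, if_neg hα.not_ge]
  simp only [exists_prop, PiClass, mem_ofPred_eq]

lemma isClosed_of_mem_piClass (hα : α ≤ 1) (hs : s ∈ PiClass X α) : IsClosed s := by
  rw [PiClass, mem_ofPred_eq, sigmaClass_of_le_one hα] at hs
  exact isOpen_compl_iff.1 hs

lemma IsClosed.mem_piClass_one (hs : IsClosed s) : s ∈ PiClass X 1 := by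
  rw [PiClass, mem_ofPred_eq, sigmaClass_of_le_one le_rfl]
  exact hs.isOpen_compl

lemma measurableSet_of_mem_sigmaClass [MeasurableSpace X] [BorelSpace X]
    (hs : s ∈ SigmaClass X α) : MeasurableSet s := by
  induction α using WellFoundedLT.induction generalizing s with
  | _ α ih =>
    rcases le_or_gt α 1 with hα | hα
    · rw [sigmaClass_of_le_one hα] at hs
      exact hs.measurableSet
    · rw [sigmaClass_of_one_lt hα] at hs
      obtain ⟨f, hf, rfl⟩ := hs
      refine .iUnion fun n => ?_
      obtain ⟨β, hβ, hfn⟩ := hf n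
      exact (ih β hβ hfn).of_compl

lemma iUnion_mem_sigmaClass (hα : 1 < α) {ι : Type*} [Countable ι] {t : ι → Set X}
    (ht : ∀ i, ∃ β < α, t i ∈ PiClass X β) : ⋃ i, t i ∈ SigmaClass X α := by
  rw [sigmaClass_of_one_lt hα]
  rcases isEmpty_or_nonempty ι with hι | hι
  · refine ⟨fun _ => ∅, fun _ => ⟨1, hα, isClosed_empty.mem_piClass_one⟩, ?_⟩
    simp
  · obtain ⟨e, he⟩ := exists_surjective_nat ι
    exact ⟨t ∘ e, fun n => ht (e n), (he.iUnion_comp t).symm⟩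

end BorelClasses

section PiClass

variable {G X : Type*} [TopologicalSpace G] [BaireSpace G] [SecondCountableTopology G]
  [SMul G X] [TopologicalSpace X] [ContinuousSMul G X] [MeasurableSpace X] [BorelSpace X]

theorem vaughtStar_mem_piClass {α : Ordinal} (hα : 2 ≤ α) {B : Set X} (hB : B ∈ PiClass X α)
    {V : Set G} (hV : IsOpen V) : VaughtStar B V ∈ PiClass X α := by
  induction α using WellFoundedLT.induction generalizing B V with
  | _ α ih =>
    have hα1 : 1 < α := one_lt_two.trans_le hα
    obtain ⟨f, hf, hBc⟩ := (sigmaClass_of_one_lt hα1).le hB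
    have hf_meas : ∀ n, MeasurableSet (f n) := fun n =>
      let ⟨β, _, hfn⟩ := hf n
      (measurableSet_of_mem_sigmaClass hfn).of_compl
    have hB_eq : B = ⋂ n, (f n)ᶜ := by rw [← compl_iUnion, ← hBc, compl_compl]
    have hcompl :
        (VaughtStar B V)ᶜ = ⋃ p : ℕ × basicOpensIn V, VaughtStar (f p.1) (p.2 : Set G) := by
      simp only [hB_eq, vaughtStar_iInter, vaughtStar_compl (hf_meas _) hV, compl_iInter,
        compl_compl, iUnion_prod']
    show (VaughtStar B V)ᶜ ∈ SigmaClass X α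
    rw [hcompl]
    refine iUnion_mem_sigmaClass hα1 fun ⟨n, W⟩ => ?_
    obtain ⟨β, hβα, hfn⟩ := hf n
    have hW : IsOpen (W : Set G) := isOpen_of_mem_basicOpensIn W.2
    rcases le_or_gt β 1 with hβ | hβ
    · exact ⟨1, hα1, ((isClosed_of_mem_piClass hβ hfn).vaughtStar hW).mem_piClass_one⟩
    · have h2β : 2 ≤ β := by rwa [← one_add_one_eq_two, Order.add_one_le_iff]
      exact ⟨β, hβα, ih β hβα h2β hfn hW⟩

end PiClass

theorem vaughtStar_borel_and_pi_general {G X : Type*} [Group G] [TopologicalSpace G]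
    [PolishSpace G] [TopologicalSpace X]
    [MeasurableSpace X] [BorelSpace X] [MulAction G X] [ContinuousSMul G X]
    (B : Set X) (H : Set G) (hH : IsOpen H) :
    (MeasurableSet B → MeasurableSet (VaughtStar B H)) ∧
    (∀ α : Ordinal, 2 ≤ α → B ∈ PiClass X α → VaughtStar B H ∈ PiClass X α) :=
  ⟨fun hB => hB.vaughtStar hH, fun _ hα hB => vaughtStar_mem_piClass hα hB hH⟩

/-- The Vaught transform of a Borel set is Borel; moreover the Vaught transform
of a `Π⁰_α` set with `α ≥ 2` is again `Π⁰_α`. -/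
theorem vaughtStar_borel_and_pi {G X : Type*} [Group G] [TopologicalSpace G]
    [IsTopologicalGroup G] [PolishSpace G] [TopologicalSpace X] [PolishSpace X]
    [MeasurableSpace X] [BorelSpace X] [MulAction G X] [ContinuousSMul G X]
    (B : Set X) (H : Set G) (hH : IsOpen H) :
    (MeasurableSet B → MeasurableSet (VaughtStar B H)) ∧
    (∀ α : Ordinal, 2 ≤ α → B ∈ PiClass X α → VaughtStar B H ∈ PiClass X α) :=
  vaughtStar_borel_and_pi_general B H hH
end
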